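/- Let P be an irreducible, aperiodic Markov chain on a finite state space K with stationary distribution π, and let A ⊆ K be nonempty. Then ψ_evo(A) ≤ (1/2)·∫₀¹ (π(A_u)/π(A))·log(π(A_u)/π(A)) du (with the convention 0·log 0 = 0). -/

import Mathlib

open Finset MeasureTheory

noncomputable section

attribute [local instance] Classical.propDecidable

variable {K : Type*} [Fintype K]

/-- `matPow P t u v` is the `t`-step transition probability from `u` to `v`. -/
def matPow (P : K → K → ℝ) : ℕ → K → K → ℝ
  | 0 => fun u v => if u = v then 1 else 0
  | (t + 1) => fun u v => ∑ w, matPow P t u w * P w v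

/-- `P` is a stochastic matrix with (strictly positive) stationary distribution `π`. -/
structure IsMarkov (P : K → K → ℝ) (π : K → ℝ) : Prop where
  nonneg : ∀ u v, 0 ≤ P u v
  rowSum : ∀ u, ∑ v, P u v = 1
  piPos : ∀ v, 0 < π v
  piSum : ∑ v, π v = 1
  stationary : ∀ v, ∑ u, π u * P u v = π v

/-- `P` is lazy: every holding probability is at least `1/2`. -/
def IsLazy (P : K → K → ℝ) : Prop := ∀ u, (1 : ℝ) / 2 ≤ P u u

/-- irreducibility: every state can reach every other state. -/
def MCIrreducible (P : K → K → ℝ) : Prop := ∀ u v : K, ∃ t : ℕ, 0 < matPow P t u v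

/-- aperiodicity: the gcd of the return times of every state is `1`. -/
def MCAperiodic (P : K → K → ℝ) : Prop :=
  ∀ u : K, ∀ d : ℕ, (∀ t : ℕ, 0 < matPow P t u u → d ∣ t) → d ≤ 1

/-- reversibility: the detailed balance condition. -/
def IsReversible (P : K → K → ℝ) (π : K → ℝ) : Prop :=
  ∀ u v, π u * P u v = π v * P v u

/-- `π`-measure of a set. -/
def meas (π : K → ℝ) (A : Finset K) : ℝ := ∑ v ∈ A, π v

/-- the time reversal `P̄(u,v) = π(v) P(v,u) / π(u)`. -/
def rev (P : K → K → ℝ) (π : K → ℝ) (u v : K) : ℝ := π v * P v u / π u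

/-- transition probability from a point into a set, w.r.t. kernel `R`. -/
def setProb (R : K → K → ℝ) (v : K) (C : Finset K) : ℝ := ∑ c ∈ C, R v c

/-- the level set `A_u = {y : R(y,A) > u}`, w.r.t. kernel `R`. -/
def levelSet (R : K → K → ℝ) (A : Finset K) (u : ℝ) : Finset K :=
  Finset.univ.filter (fun y => u < setProb R y A)

/-- `g` is a fractional subset of `S` of measure `t`. -/
def IsFracSub (π : K → ℝ) (S : Finset K) (g : K → ℝ) (t : ℝ) : Prop :=
  (∀ v, 0 ≤ g v ∧ g v ≤ 1) ∧ (∀ v ∉ S, g v = 0) ∧ ∑ v, g v * π v = t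

/-- ergodic flow from a fractional subset `g` into `C`, w.r.t. kernel `R`. -/
def fracFlow (R : K → K → ℝ) (π : K → ℝ) (g : K → ℝ) (C : Finset K) : ℝ :=
  ∑ v, g v * π v * setProb R v C

/-- `Ψ(t, Aᶜ)` w.r.t. kernel `R`: for `t ≤ π(A)` the minimal flow into `Aᶜ` from a
fractional subset of `A` of measure `t`; for `t > π(A)` the minimal flow into `A`
from a fractional subset of `Aᶜ` of measure `1 − t`. -/
def Psi (R : K → K → ℝ) (π : K → ℝ) (A : Finset K) (t : ℝ) : ℝ :=
  if t ≤ meas π A then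
    sInf {q : ℝ | ∃ g : K → ℝ, IsFracSub π A g t ∧ q = fracFlow R π g Aᶜ}
  else
    sInf {q : ℝ | ∃ g : K → ℝ, IsFracSub π Aᶜ g (1 - t) ∧ q = fracFlow R π g A}

/-- `Ψ_big(t, Aᶜ)` w.r.t. kernel `R`: maximal flow into `Aᶜ` from a fractional
subset of `A` of measure `t`. -/
def PsiSup (R : K → K → ℝ) (π : K → ℝ) (A : Finset K) (t : ℝ) : ℝ :=
  sSup {q : ℝ | ∃ g : K → ℝ, IsFracSub π A g t ∧ q = fracFlow R π g Aᶜ}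

/-- the spread `ψ⁺(A)` (w.r.t. kernel `R`). -/
def psiPlus (R : K → K → ℝ) (π : K → ℝ) (A : Finset K) : ℝ :=
  (∫ t in (0:ℝ)..(meas π A), Psi R π A t) / (meas π A) ^ 2

/-- the quantity `ψ⁻(A)` (w.r.t. kernel `R`). -/
def psiMinus (R : K → K → ℝ) (π : K → ℝ) (A : Finset K) : ℝ :=
  (∫ t in (meas π A)..(1:ℝ), Psi R π A t) / (meas π A) ^ 2

/-- the modified spread `ψ_mod(A)` (w.r.t. kernel `R`). -/
def psiMod (R : K → K → ℝ) (π : K → ℝ) (A : Finset K) : ℝ :=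
  (∫ t in (0:ℝ)..(1:ℝ), Psi R π A t / min t (1 - t)) / meas π A

/-- the global spread `ψ_gl(A)` (w.r.t. kernel `R`). -/
def psiGl (R : K → K → ℝ) (π : K → ℝ) (A : Finset K) : ℝ :=
  (∫ t in (0:ℝ)..(1:ℝ), Psi R π A t) / (meas π A) ^ 2

/-- the quantity `ψ_big(A)` (w.r.t. kernel `R`). -/
def psiBig (R : K → K → ℝ) (π : K → ℝ) (A : Finset K) : ℝ :=
  (∫ t in (0:ℝ)..(meas π A), PsiSup R π A t) / (meas π A) ^ 2

/-- the evolving-set quantity `ψ_evo(A)`, with level sets taken w.r.t. kernel `R`. -/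
def psiEvo (R : K → K → ℝ) (π : K → ℝ) (A : Finset K) : ℝ :=
  1 - ∫ u in (0:ℝ)..(1:ℝ), Real.sqrt (meas π (levelSet R A u) / meas π A)

/-- ergodic flow `Q(B,C)`. -/
def ergFlow (P : K → K → ℝ) (π : K → ℝ) (B C : Finset K) : ℝ :=
  ∑ u ∈ B, ∑ v ∈ C, π u * P u v

/-- conductance `Φ(A)`. -/
def conductance (P : K → K → ℝ) (π : K → ℝ) (A : Finset K) : ℝ :=
  ergFlow P π A Aᶜ / meas π A

def Qone (P : K → K → ℝ) (π : K → ℝ) (C D : Finset K) : ℝ :=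
  ∑ v ∈ C, setProb P v D * π v

def Qtwo (P : K → K → ℝ) (π : K → ℝ) (C D : Finset K) : ℝ :=
  ∑ v ∈ C, Real.sqrt (setProb P v D) * π v

def Qinfty (P : K → K → ℝ) (π : K → ℝ) (C D : Finset K) : ℝ :=
  meas π (C.filter (fun v => 0 < setProb P v D))

/-- discrete gradient `h₁⁺(A)`. -/
def hOneP (P : K → K → ℝ) (π : K → ℝ) (A : Finset K) : ℝ :=
  Qone P π A Aᶜ / min (meas π A) (meas π Aᶜ)

/-- discrete gradient `h₁⁻(A)`. -/
def hOneM (P : K → K → ℝ) (π : K → ℝ) (A : Finset K) : ℝ :=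
  Qone P π Aᶜ A / min (meas π A) (meas π Aᶜ)

/-- discrete gradient `h₂⁺(A)`. -/
def hTwoP (P : K → K → ℝ) (π : K → ℝ) (A : Finset K) : ℝ :=
  Qtwo P π A Aᶜ / min (meas π A) (meas π Aᶜ)

/-- discrete gradient `h₂⁻(A)`. -/
def hTwoM (P : K → K → ℝ) (π : K → ℝ) (A : Finset K) : ℝ :=
  Qtwo P π Aᶜ A / min (meas π A) (meas π Aᶜ)

/-- discrete gradient `h_∞⁺(A)`. -/
def hInfP (P : K → K → ℝ) (π : K → ℝ) (A : Finset K) : ℝ :=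
  Qinfty P π A Aᶜ / min (meas π A) (meas π Aᶜ)

/-- discrete gradient `h_∞⁻(A)`. -/
def hInfM (P : K → K → ℝ) (π : K → ℝ) (A : Finset K) : ℝ :=
  Qinfty P π Aᶜ A / min (meas π A) (meas π Aᶜ)

/-- `p` is a probability distribution. -/
def IsDist (p : K → ℝ) : Prop := (∀ v, 0 ≤ p v) ∧ ∑ v, p v = 1

/-- the distribution after `t` steps starting from `p`. -/
def stepDist (P : K → K → ℝ) (p : K → ℝ) (t : ℕ) (v : K) : ℝ :=
  ∑ u, p u * matPow P t u v

/-- total variation distance. -/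
def tvDist (μ π : K → ℝ) : ℝ := (1 / 2) * ∑ v, |μ v - π v|

/-- chi-square distance. -/
def chi2Dist (μ π : K → ℝ) : ℝ := ∑ v, (μ v / π v - 1) ^ 2 * π v

/-- total variation mixing time `τ(ε)`: the max over initial distributions of the
least time at which total variation distance drops to `ε`. -/
def mixTV (P : K → K → ℝ) (π : K → ℝ) (ε : ℝ) : ℕ :=
  sSup {n : ℕ | ∃ p : K → ℝ, IsDist p ∧
    n = sInf {t : ℕ | tvDist (stepDist P p t) π ≤ ε}}

/-- chi-square mixing time `χ²(ε)`. -/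
def mixChi2 (P : K → K → ℝ) (π : K → ℝ) (ε : ℝ) : ℕ :=
  sSup {n : ℕ | ∃ p : K → ℝ, IsDist p ∧
    n = sInf {t : ℕ | chi2Dist (stepDist P p t) π ≤ ε}}

/-- `π₀ = min_v π(v)`. -/
def piMin (π : K → ℝ) : ℝ := sInf {r : ℝ | ∃ v : K, r = π v}

/-- `ψ⁺(x)`: worst spread over sets of measure at most `x`. -/
def psiPlusSize (R : K → K → ℝ) (π : K → ℝ) (x : ℝ) : ℝ :=
  sInf {r : ℝ | ∃ A : Finset K, 0 < meas π A ∧ meas π A ≤ x ∧ r = psiPlus R π A}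

/-- `ψ_evo(x)`: worst evolving-set quantity over sets of measure at most `x`. -/
def psiEvoSize (R : K → K → ℝ) (π : K → ℝ) (x : ℝ) : ℝ :=
  sInf {r : ℝ | ∃ A : Finset K, 0 < meas π A ∧ meas π A ≤ x ∧ r = psiEvo R π A}

/-- `ψ_big(x)`: worst `ψ_big` over sets of measure at most `x`. -/
def psiBigSize (R : K → K → ℝ) (π : K → ℝ) (x : ℝ) : ℝ :=
  sInf {r : ℝ | ∃ A : Finset K, 0 < meas π A ∧ meas π A ≤ x ∧ r = psiBig R π A}

/-- Dirichlet form. -/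
def dirichletForm (P : K → K → ℝ) (π : K → ℝ) (f : K → ℝ) : ℝ :=
  (1 / 2) * ∑ u, ∑ v, π u * P u v * (f u - f v) ^ 2

/-- variance w.r.t. `π`. -/
def varPi (π : K → ℝ) (f : K → ℝ) : ℝ :=
  ∑ v, π v * f v ^ 2 - (∑ v, π v * f v) ^ 2

/-- the spectral gap `λ`. -/
def specGap (P : K → K → ℝ) (π : K → ℝ) : ℝ :=
  sInf {r : ℝ | ∃ f : K → ℝ, (∃ u v, f u ≠ f v) ∧ r = dirichletForm P π f / varPi π f}

/-- `P_* = 1 − min_{u ∈ A} P(u, A)`. -/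
def Pstar (P : K → K → ℝ) (A : Finset K) : ℝ :=
  1 - sInf {r : ℝ | ∃ u ∈ A, r = setProb P u A}

/-- `P_min = min {P(u,v)/π(v) : u ∈ A, v ∈ Aᶜ, P(u,v) > 0}`. -/
def PminEdge (P : K → K → ℝ) (π : K → ℝ) (A : Finset K) : ℝ :=
  sInf {r : ℝ | ∃ u ∈ A, ∃ v ∈ Aᶜ, 0 < P u v ∧ r = P u v / π v}

/-- `w(t) = inf {y ∈ [0,1] : π(A_y) ≤ t}`. -/
def wfun (R : K → K → ℝ) (π : K → ℝ) (A : Finset K) (t : ℝ) : ℝ :=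
  sInf {y : ℝ | y ∈ Set.Icc (0:ℝ) 1 ∧ meas π (levelSet R A y) ≤ t}

/-
With `r(u) = π(A_u)/π(A)`, Fubini gives `∫₀¹ π(A_u) du = Σ_y π(y) P̄(y,A) = π(A)`, so
`∫₀¹ r = 1` and `ψ_evo(A) = ∫₀¹ (r - √r)`. The theorem then follows by integrating the
pointwise bound `x - √x ≤ ½ x log x`, which is `log √x ≥ 1 - 1/√x` multiplied by `x`.
-/

open Set

lemma Real.sub_sqrt_le_half_mul_log {x : ℝ} (hx : 0 ≤ x) :
    x - √x ≤ 1 / 2 * (x * Real.log x) := by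
  rcases hx.eq_or_lt with rfl | hx
  · simp
  have hs : 0 < √x := Real.sqrt_pos.2 hx
  have key := mul_le_mul_of_nonneg_left (Real.one_sub_inv_le_log_of_pos hs) hx.le
  rw [Real.log_sqrt hx.le] at key
  have hx' : x * (√x)⁻¹ = √x := by
    rw [mul_inv_eq_iff_eq_mul₀ hs.ne', Real.mul_self_sqrt hx.le]
  linarith [mul_sub x 1 (√x)⁻¹]

lemma intervalIntegral.integral_zero_one_ite_lt {c : ℝ} (a : ℝ) (hc₀ : 0 ≤ c) (hc₁ : c ≤ 1) :
    ∫ u in (0:ℝ)..1, (if u < c then a else 0) = c * a := by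
  have hind : (fun u : ℝ => if u < c then a else 0) = (Iio c).indicator fun _ => a := by
    ext u; simp [indicator]
  have hIoo : Iio c ∩ Ioc 0 1 = Ioo 0 c := by
    ext u
    simp only [mem_inter_iff, Set.mem_Iio, Set.mem_Ioc, Set.mem_Ioo]
    constructor <;> intro h <;> grind
  rw [hind, intervalIntegral.integral_of_le zero_le_one,
    MeasureTheory.integral_indicator measurableSet_Iio,
    Measure.restrict_restrict measurableSet_Iio, hIoo]
  simp [hc₀]

lemma Antitone.intervalIntegrable_comp {f g : ℝ → ℝ} (hf : Antitone f) (hg : Continuous g)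
    (a b : ℝ) : IntervalIntegrable (g ∘ f) volume a b := by
  obtain ⟨C, hC⟩ :=
    (isCompact_Icc (a := f (max a b)) (b := f (min a b))).exists_bound_of_continuousOn
      hg.continuousOn
  refine (intervalIntegrable_const (c := C)).mono_fun'
    (hg.measurable.comp hf.measurable).aestronglyMeasurable
    (ae_restrict_of_forall_mem measurableSet_uIoc fun u hu => ?_)
  have hu : u ∈ uIcc a b := uIoc_subset_uIcc hu
  exact hC _ ⟨hf hu.2, hf hu.1⟩

lemma one_sub_integral_sqrt_le_half_integral_mul_log {r : ℝ → ℝ} (hr : Antitone r)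
    (hr₀ : ∀ u, 0 ≤ r u) (hr₁ : ∫ u in (0:ℝ)..1, r u = 1) :
    1 - ∫ u in (0:ℝ)..1, √(r u) ≤ 1 / 2 * ∫ u in (0:ℝ)..1, r u * Real.log (r u) := by
  have hint (g : ℝ → ℝ) (hg : Continuous g) : IntervalIntegrable (fun u => g (r u)) volume 0 1 :=
    hr.intervalIntegrable_comp hg 0 1
  calc 1 - ∫ u in (0:ℝ)..1, √(r u) = ∫ u in (0:ℝ)..1, (r u - √(r u)) := by
        rw [intervalIntegral.integral_sub hr.intervalIntegrable (hint _ Real.continuous_sqrt), hr₁]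
    _ ≤ ∫ u in (0:ℝ)..1, 1 / 2 * (r u * Real.log (r u)) :=
        intervalIntegral.integral_mono_on zero_le_one
          (hr.intervalIntegrable.sub (hint _ Real.continuous_sqrt))
          ((hint _ Real.continuous_mul_log).const_mul _)
          fun u _ => Real.sub_sqrt_le_half_mul_log (hr₀ u)
    _ = _ := intervalIntegral.integral_const_mul _ _

section LevelSets

variable (R : K → K → ℝ) (π : K → ℝ) (A : Finset K)

lemma meas_levelSet_antitone (hπ : ∀ v, 0 ≤ π v) :
    Antitone fun u => meas π (levelSet R A u) := by
  intro u u' huu'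
  refine Finset.sum_le_sum_of_subset_of_nonneg (fun y hy => ?_) fun v _ _ => hπ v
  simp only [levelSet, Finset.mem_filter, Finset.mem_univ, true_and] at hy ⊢
  exact huu'.trans_lt hy

lemma integral_meas_levelSet (hπ : ∀ v, 0 ≤ π v) (h₀ : ∀ y, 0 ≤ setProb R y A)
    (h₁ : ∀ y, setProb R y A ≤ 1) :
    ∫ u in (0:ℝ)..1, meas π (levelSet R A u) = ∑ y, setProb R y A * π y := by
  have hsum (u : ℝ) : meas π (levelSet R A u) =
      ∑ y, if u < setProb R y A then π y else 0 := by
    rw [meas, levelSet, Finset.sum_filter]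
  have hanti (y : K) : Antitone fun u : ℝ => if u < setProb R y A then π y else 0 :=
    fun u u' huu' => by
      dsimp only
      split_ifs <;> grind
  simp_rw [hsum]
  rw [intervalIntegral.integral_finsetSum fun y _ => (hanti y).intervalIntegrable]
  exact Finset.sum_congr rfl fun y _ => intervalIntegral.integral_zero_one_ite_lt _ (h₀ y) (h₁ y)

end LevelSets

namespace IsMarkov

variable {P : K → K → ℝ} {π : K → ℝ} (hM : IsMarkov P π)
include hM

lemma rev_nonneg (u v : K) : 0 ≤ rev P π u v :=
  div_nonneg (mul_nonneg (hM.piPos v).le (hM.nonneg v u)) (hM.piPos u).le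

lemma setProb_rev_nonneg (y : K) (A : Finset K) : 0 ≤ setProb (rev P π) y A :=
  Finset.sum_nonneg fun v _ => hM.rev_nonneg y v

lemma setProb_rev_univ (y : K) : setProb (rev P π) y Finset.univ = 1 := by
  simp only [setProb, rev]
  rw [← Finset.sum_div, hM.stationary y, div_self (hM.piPos y).ne']

lemma setProb_rev_le_one (y : K) (A : Finset K) : setProb (rev P π) y A ≤ 1 :=
  hM.setProb_rev_univ y ▸ Finset.sum_le_sum_of_subset_of_nonneg (Finset.subset_univ A)
    fun v _ _ => hM.rev_nonneg y v

lemma sum_setProb_rev_mul (A : Finset K) : ∑ y, setProb (rev P π) y A * π y = meas π A := by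
  have hterm (y : K) : setProb (rev P π) y A * π y = ∑ a ∈ A, π a * P a y := by
    rw [setProb, Finset.sum_mul]
    exact Finset.sum_congr rfl fun a _ => div_mul_cancel₀ _ (hM.piPos y).ne'
  simp_rw [hterm]
  rw [Finset.sum_comm]
  exact Finset.sum_congr rfl fun a _ => by rw [← Finset.mul_sum, hM.rowSum, mul_one]

lemma integral_meas_levelSet_rev (A : Finset K) :
    ∫ u in (0:ℝ)..1, meas π (levelSet (rev P π) A u) = meas π A := by
  rw [integral_meas_levelSet _ _ _ (fun v => (hM.piPos v).le) (hM.setProb_rev_nonneg · A)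
    (hM.setProb_rev_le_one · A), hM.sum_setProb_rev_mul]

end IsMarkov

theorem evolving_le_half_entropy_integral_general
    (P : K → K → ℝ) (π : K → ℝ) (A : Finset K)
    (hM : IsMarkov P π)
    (hA : A.Nonempty) :
    psiEvo (rev P π) π A ≤
      (1 / 2) * ∫ u in (0:ℝ)..(1:ℝ),
        (meas π (levelSet (rev P π) A u) / meas π A) *
          Real.log (meas π (levelSet (rev P π) A u) / meas π A) := by
  have hA₀ : 0 < meas π A := Finset.sum_pos (fun v _ => hM.piPos v) hA
  refine one_sub_integral_sqrt_le_half_integral_mul_log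
    (fun u u' h => div_le_div_of_nonneg_right
      (meas_levelSet_antitone _ π A (fun v => (hM.piPos v).le) h) hA₀.le)
    (fun u => div_nonneg (Finset.sum_nonneg fun v _ => (hM.piPos v).le) hA₀.le) ?_
  rw [intervalIntegral.integral_div, hM.integral_meas_levelSet_rev, div_self hA₀.ne']

/-- `ψ_evo(A) ≤ (1/2)·∫₀¹ (π(A_u)/π(A))·log(π(A_u)/π(A)) du`
(with the convention `0·log 0 = 0`, automatic since `Real.log 0 = 0`). -/
theorem evolving_le_half_entropy_integral
    (P : K → K → ℝ) (π : K → ℝ) (A : Finset K)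
    (hM : IsMarkov P π)
    (hirr : MCIrreducible P) (hap : MCAperiodic P)
    (hA : A.Nonempty) :
    psiEvo (rev P π) π A ≤
      (1 / 2) * ∫ u in (0:ℝ)..(1:ℝ),
        (meas π (levelSet (rev P π) A u) / meas π A) *
          Real.log (meas π (levelSet (rev P π) A u) / meas π A) :=
  evolving_le_half_entropy_integral_general P π A hM hA
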